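/- Let g, b, p be integers with g ≥ 0, b ≥ 0 and p ≥ 94178. Assume that 2·(g − 1)·(p − 2) ≤ 216·(p + b + g − 1), and assume that if g ≥ 648 then (g − 326)·b ≤ 322·p + 325·g − 322. Then g ≤ 647. -/
import Mathlib


theorem stmt_14 (g b p : ℤ) (hg : g ≥ 0) (hb : b ≥ 0) (hp : p ≥ 94178)
    (h1 : 2 * (g - 1) * (p - 2) ≤ 216 * (p + b + g - 1))
    (h2 : g ≥ 648 → (g - 326) * b ≤ 322 * p + 325 * g - 322) :
    g ≤ 647 := by
  by_contra h
  push_neg at h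
  have hg648 : g ≥ 648 := by omega
  have h2' := h2 hg648
  nlinarith [mul_nonneg (by linarith : (0:ℤ) ≤ g - 648) (by linarith : (0:ℤ) ≤ p - 94178),
    mul_nonneg hb (by linarith : (0:ℤ) ≤ g - 648),
    mul_nonneg (by linarith : (0:ℤ) ≤ p - 94178) hb]
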